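/- The central fiber p^{-1}(0) of p: Ξ_{(\vec{s}_0,…,\vec{s}_k)} → ℂ, as a set, is the union over i = 0,…,k of the preimages of the coordinate hyperplanes {λ_i = 0}, and it has exactly n_0 ⋯ n_k · (1/n_0 + ⋯ + 1/n_k) irreducible components, with n_0 ⋯ n_{i-1} n_{i+1} ⋯ n_k of them contained in the preimage of {λ_i = 0}; each such component is homeomorphic to ℂ^k. -/

import Mathlib

/-!
`Ξ_s = {x_j ^ s_j = λ}` is swept out by the branches
`t ↦ ((ω_j ^ e_j * t ^ (L / s_j))_j, t ^ L)`, where `L = lcm s`, `ω_j = ζ ^ (L / s_j)` for a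
primitive `L`-th root of unity `ζ`, and `e ∈ ∏ j, ZMod s_j`. Replacing `t` by `ζ ^ m * t` shifts
`e` by the diagonal `m`, and comparing the points over `λ = 1` shows that two branches have
nested images only if their labels are in the same diagonal orbit. Each branch is a closed
embedding of `ℂ` because `‖t‖ ≤ max 1 ‖t ^ L‖`. Over `λ_i = 0` the `i`-th factor collapses to
its origin, so the central fiber is the union of the products of one branch of each other
factor: one closed copy of `ℂ^k` for every `i` and every choice of diagonal orbits in the
other `k` factors.
-/

/-- The number of orbits of the diagonal translation action of `ℤ` on `∏ j, ZMod (s j)`. -/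
noncomputable def diagOrbitCount (n : ℕ) (s : Fin n → ℕ) : ℕ :=
  Nat.card (Quot (fun e₁ e₂ : ∀ j : Fin n, ZMod (s j) =>
    ∃ m : ℤ, ∀ j, e₂ j = e₁ j + (m : ZMod (s j))))

/-- The total space `Ξ_{(\vec s_0,…,\vec s_k)}`. -/
abbrev XiProd (k : ℕ) (I : Fin (k + 1) → ℕ)
    (s : (i : Fin (k + 1)) → Fin (I i) → ℕ) : Type :=
  {x : (i : Fin (k + 1)) → (Fin (I i) → ℂ) × ℂ // ∀ i j, (x i).1 j ^ s i j = (x i).2}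

theorem IsPrimitiveRoot.zpow_eq_zpow_of_intCast_eq {G₀ : Type*} [CommGroupWithZero G₀]
    {ω : G₀} {s : ℕ} [NeZero s] (h : IsPrimitiveRoot ω s) {a b : ℤ}
    (hab : (a : ZMod s) = b) : ω ^ a = ω ^ b := by
  have hω : ω ≠ 0 := h.ne_zero (NeZero.ne s)
  rw [ZMod.intCast_eq_intCast_iff_dvd_sub, ← h.zpow_eq_one_iff_dvd, zpow_sub₀ hω,
    div_eq_one_iff_eq (zpow_ne_zero _ hω)] at hab
  exact hab.symm

theorem IsPrimitiveRoot.pow_val_eq_zpow {G₀ : Type*} [CommGroupWithZero G₀]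
    {ω : G₀} {s : ℕ} [NeZero s] (h : IsPrimitiveRoot ω s) {x : ZMod s} {c : ℤ}
    (hc : (c : ZMod s) = x) : ω ^ x.val = ω ^ c := by
  rw [← zpow_natCast]
  exact h.zpow_eq_zpow_of_intCast_eq (by simp [hc])

theorem norm_le_max_one_norm_pow {𝕜 : Type*} [NormedDivisionRing 𝕜] (t : 𝕜) {n : ℕ}
    (hn : n ≠ 0) : ‖t‖ ≤ max 1 ‖t ^ n‖ := by
  rcases le_or_gt ‖t‖ 1 with ht | ht
  · exact ht.trans (le_max_left _ _)
  · rw [norm_pow]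
    exact (le_self_pow₀ ht.le hn).trans (le_max_right _ _)

theorem Topology.isClosedEmbedding_of_norm_le_max_one {E F : Type*}
    [SeminormedAddCommGroup E] [ProperSpace E] [SeminormedAddCommGroup F] [T2Space F]
    {f : E → F} (hf : Continuous f) (hinj : Function.Injective f)
    (hnorm : ∀ x, ‖x‖ ≤ max 1 ‖f x‖) : IsClosedEmbedding f := by
  refine .of_continuous_injective_isClosedMap hf hinj ?_
  refine (isProperMap_iff_isCompact_preimage.2 ⟨hf, fun K hK => ?_⟩).isClosedMap
  obtain ⟨R, hR⟩ := hK.isBounded.exists_norm_le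
  refine (isCompact_closedBall (0 : E) (max 1 R)).of_isClosed_subset
    (hK.isClosed.preimage hf) fun x hx => ?_
  rw [mem_closedBall_zero_iff]
  exact (hnorm x).trans (max_le_max le_rfl (hR _ hx))

theorem Topology.IsClosedEmbedding.of_subtypeVal_comp {X Y : Type*} [TopologicalSpace X]
    [TopologicalSpace Y] {p : Y → Prop} {f : X → Subtype p}
    (hf : IsClosedEmbedding (Subtype.val ∘ f)) : IsClosedEmbedding f where
  toIsEmbedding := (IsEmbedding.of_comp_iff .subtypeVal).1 hf.isEmbedding
  isClosed_range := by
    rw [← Set.preimage_image_eq (Set.range f) Subtype.val_injective, ← Set.range_comp]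
    exact hf.isClosed_range.preimage continuous_subtype_val

section Branch

variable {n : ℕ} (s : Fin n → ℕ)

noncomputable def branchDeg : ℕ := Finset.univ.lcm s

noncomputable def branchExp (j : Fin n) : ℕ := branchDeg s / s j

noncomputable def branchRoot : ℂ := Complex.exp (2 * Real.pi * Complex.I / branchDeg s)

noncomputable def branch (e : ∀ j, ZMod (s j)) (t : ℂ) : (Fin n → ℂ) × ℂ :=
  (fun j => (branchRoot s ^ branchExp s j) ^ (e j).val * t ^ branchExp s j, t ^ branchDeg s)

def diagRel (e₁ e₂ : ∀ j, ZMod (s j)) : Prop :=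
  ∃ m : ℤ, ∀ j, e₂ j = e₁ j + (m : ZMod (s j))

abbrev DiagOrbit : Type := Quot (diagRel s)

variable {s}

theorem branchDeg_pos (hs : ∀ j, 0 < s j) : 0 < branchDeg s :=
  Nat.pos_of_ne_zero <| by simpa [branchDeg, Finset.lcm_eq_zero_iff] using fun j => (hs j).ne'

theorem branchExp_mul (j : Fin n) : branchExp s j * s j = branchDeg s :=
  Nat.div_mul_cancel (Finset.dvd_lcm (Finset.mem_univ j))

theorem branchExp_pos (hs : ∀ j, 0 < s j) (j : Fin n) : 0 < branchExp s j :=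
  Nat.pos_of_mul_pos_right ((branchExp_mul j).symm ▸ branchDeg_pos hs)

theorem isPrimitiveRoot_branchRoot (hs : ∀ j, 0 < s j) :
    IsPrimitiveRoot (branchRoot s) (branchDeg s) :=
  Complex.isPrimitiveRoot_exp _ (branchDeg_pos hs).ne'

theorem isPrimitiveRoot_branchRoot_pow (hs : ∀ j, 0 < s j) (j : Fin n) :
    IsPrimitiveRoot (branchRoot s ^ branchExp s j) (s j) :=
  (isPrimitiveRoot_branchRoot hs).pow (branchDeg_pos hs) (branchExp_mul j).symm

theorem branch_fst_pow (hs : ∀ j, 0 < s j) (e : ∀ j, ZMod (s j)) (t : ℂ) (j : Fin n) :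
    (branch s e t).1 j ^ s j = (branch s e t).2 := by
  rw [branch, mul_pow, ← pow_mul, mul_comm (e j).val, pow_mul,
    (isPrimitiveRoot_branchRoot_pow hs j).pow_eq_one, one_pow, one_mul, ← pow_mul,
    branchExp_mul]

theorem continuous_branch (e : ∀ j, ZMod (s j)) : Continuous (branch s e) := by
  unfold branch
  fun_prop

theorem branch_zpow_mul (hs : ∀ j, 0 < s j) (e : ∀ j, ZMod (s j)) (m : ℤ) (t : ℂ) :
    branch s e (branchRoot s ^ m * t) = branch s (fun j => e j + m) t := by
  have hζ := isPrimitiveRoot_branchRoot hs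
  refine Prod.ext (funext fun j => ?_) ?_
  · have : NeZero (s j) := ⟨(hs j).ne'⟩
    have hω := isPrimitiveRoot_branchRoot_pow hs j
    have hω0 := hω.ne_zero (hs j).ne'
    change (branchRoot s ^ branchExp s j) ^ (e j).val * (branchRoot s ^ m * t) ^ branchExp s j
      = (branchRoot s ^ branchExp s j) ^ (e j + m).val * t ^ branchExp s j
    rw [hω.pow_val_eq_zpow (x := e j + m) (c := (e j).val + m) (by simp), zpow_add₀ hω0,
      zpow_natCast, mul_pow, ← zpow_natCast (branchRoot s ^ m), ← zpow_mul, mul_comm m, zpow_mul,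
      zpow_natCast, mul_assoc]
  · simp only [branch]
    rw [mul_pow, ← zpow_natCast (branchRoot s ^ m), ← zpow_mul, mul_comm m, zpow_mul,
      zpow_natCast, hζ.pow_eq_one, one_zpow, one_mul]

theorem eq_of_branch_eq_branch (hs : ∀ j, 0 < s j) {e f : ∀ j, ZMod (s j)} {t : ℂ}
    (ht : t ≠ 0) (h : branch s e t = branch s f t) : e = f := by
  funext j
  have : NeZero (s j) := ⟨(hs j).ne'⟩
  have hj := mul_right_cancel₀ (pow_ne_zero _ ht) (congrFun (congrArg Prod.fst h) j)
  exact ZMod.val_injective _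
    ((isPrimitiveRoot_branchRoot_pow hs j).pow_inj (ZMod.val_lt _) (ZMod.val_lt _) hj)

theorem exists_of_branch_eq_branch (hs : ∀ j, 0 < s j) {e f : ∀ j, ZMod (s j)} {t t' : ℂ}
    (ht : t ≠ 0) (h : branch s e t = branch s f t') :
    ∃ a : ℕ, t' = branchRoot s ^ a * t ∧ e = fun j => f j + (a : ℤ) := by
  have : NeZero (branchDeg s) := ⟨(branchDeg_pos hs).ne'⟩
  have hL : (t' / t) ^ branchDeg s = 1 := by
    rw [div_pow, div_eq_one_iff_eq (pow_ne_zero _ ht)]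
    exact (congrArg Prod.snd h).symm
  obtain ⟨a, -, ha⟩ := (isPrimitiveRoot_branchRoot hs).eq_pow_of_pow_eq_one hL
  have ht' : t' = branchRoot s ^ a * t := by rw [ha, div_mul_cancel₀ _ ht]
  refine ⟨a, ht', eq_of_branch_eq_branch hs ht ?_⟩
  rw [h, ht', ← zpow_natCast, branch_zpow_mul hs]

theorem branch_injective (hs : ∀ j, 0 < s j) (e : ∀ j, ZMod (s j)) :
    Function.Injective (branch s e) := by
  intro t t' h
  have hL := branchDeg_pos hs
  rcases eq_or_ne t 0 with rfl | ht
  · have := congrArg Prod.snd h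
    simp only [branch, zero_pow hL.ne'] at this
    exact (pow_eq_zero_iff hL.ne' |>.1 this.symm).symm
  obtain ⟨a, rfl, hea⟩ := exists_of_branch_eq_branch hs ht h
  suffices branchDeg s ∣ a by
    rw [(isPrimitiveRoot_branchRoot hs).pow_eq_one_iff_dvd a |>.2 this, one_mul]
  refine Finset.lcm_dvd fun j _ => ?_
  have := congrFun hea j
  rw [left_eq_add, Int.cast_natCast, ZMod.natCast_eq_zero_iff] at this
  exact this

theorem eq_zero_of_snd_eq_zero (hs : ∀ j, 0 < s j) {x : (Fin n → ℂ) × ℂ}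
    (hx : ∀ j, x.1 j ^ s j = x.2) (h0 : x.2 = 0) : x = 0 :=
  Prod.ext (funext fun j => pow_eq_zero_iff (hs j).ne' |>.1 ((hx j).trans h0)) h0

theorem exists_branch_eq (hs : ∀ j, 0 < s j) {x : (Fin n → ℂ) × ℂ}
    (hx : ∀ j, x.1 j ^ s j = x.2) : ∃ e t, branch s e t = x := by
  have hL := branchDeg_pos hs
  rcases eq_or_ne x.2 0 with h0 | h0
  · refine ⟨0, 0, ?_⟩
    rw [eq_zero_of_snd_eq_zero hs hx h0]
    exact Prod.ext (funext fun j => by simp [branch, (branchExp_pos hs j).ne'])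
      (zero_pow hL.ne')
  obtain ⟨t, ht⟩ := IsAlgClosed.exists_pow_nat_eq x.2 hL
  have ht0 : t ≠ 0 := by rintro rfl; exact h0 (ht ▸ zero_pow hL.ne')
  have hroot (j : Fin n) : ∃ a < s j,
      (branchRoot s ^ branchExp s j) ^ a = x.1 j / t ^ branchExp s j := by
    have : NeZero (s j) := ⟨(hs j).ne'⟩
    refine (isPrimitiveRoot_branchRoot_pow hs j).eq_pow_of_pow_eq_one ?_
    rw [div_pow, ← pow_mul, branchExp_mul, ht, hx j, div_self h0]
  choose a ha hxa using hroot
  refine ⟨fun j => a j, t, Prod.ext (funext fun j => ?_) ht⟩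
  simp only [branch, ZMod.val_cast_of_lt (ha j), hxa, div_mul_cancel₀ _ (pow_ne_zero _ ht0)]

theorem diagRel_symm {e f : ∀ j, ZMod (s j)} : diagRel s e f → diagRel s f e :=
  fun ⟨m, hm⟩ => ⟨-m, fun j => by rw [hm j]; push_cast; ring⟩

theorem range_branch_subset_of_diagRel (hs : ∀ j, 0 < s j) {e f : ∀ j, ZMod (s j)}
    (h : diagRel s e f) : Set.range (branch s f) ⊆ Set.range (branch s e) := by
  obtain ⟨m, hm⟩ := h
  rintro _ ⟨t, rfl⟩
  exact ⟨branchRoot s ^ m * t, by rw [branch_zpow_mul hs, ← funext hm]⟩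

theorem diagRel_of_range_branch_subset (hs : ∀ j, 0 < s j) {e f : ∀ j, ZMod (s j)}
    (h : Set.range (branch s e) ⊆ Set.range (branch s f)) : diagRel s f e := by
  obtain ⟨t, ht⟩ := h ⟨1, rfl⟩
  obtain ⟨a, -, hea⟩ := exists_of_branch_eq_branch hs one_ne_zero ht.symm
  exact ⟨a, fun j => congrFun hea j⟩

theorem range_branch_eq_of_eqvGen (hs : ∀ j, 0 < s j) {e f : ∀ j, ZMod (s j)}
    (h : Relation.EqvGen (diagRel s) e f) :
    Set.range (branch s e) = Set.range (branch s f) := by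
  induction h with
  | rel e f h =>
    exact (range_branch_subset_of_diagRel hs (diagRel_symm h)).antisymm
      (range_branch_subset_of_diagRel hs h)
  | refl => rfl
  | symm _ _ _ ih => exact ih.symm
  | trans _ _ _ _ _ ih₁ ih₂ => exact ih₁.trans ih₂

theorem exists_mem_range_branch_out (hs : ∀ j, 0 < s j) {x : (Fin n → ℂ) × ℂ}
    (hx : ∀ j, x.1 j ^ s j = x.2) : ∃ q : DiagOrbit s, x ∈ Set.range (branch s q.out) := by
  obtain ⟨e, t, rfl⟩ := exists_branch_eq hs hx
  exact ⟨Quot.mk _ e, (range_branch_eq_of_eqvGen hs (Quot.eqvGen_exact (Quot.out_eq _))).symm ▸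
    Set.mem_range_self t⟩

theorem eq_of_range_branch_out_subset (hs : ∀ j, 0 < s j) {q q' : DiagOrbit s}
    (h : Set.range (branch s q.out) ⊆ Set.range (branch s q'.out)) : q = q' := by
  rw [← Quot.out_eq q, ← Quot.out_eq q']
  exact (Quot.sound (diagRel_of_range_branch_subset hs h)).symm

end Branch

section Central

variable {k : ℕ} {I : Fin (k + 1) → ℕ} {s : (i : Fin (k + 1)) → Fin (I i) → ℕ}

variable (k I s) in
abbrev CentralIndex : Type :=
  Σ i : Fin (k + 1), ∀ j : Fin k, DiagOrbit (s (i.succAbove j))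

noncomputable def centralParam (hs : ∀ i j, 0 < s i j) (d : CentralIndex k I s)
    (t : Fin k → ℂ) : XiProd k I s :=
  ⟨Fin.insertNth (α := fun i => (Fin (I i) → ℂ) × ℂ) d.1 0
      fun j => branch (s (d.1.succAbove j)) (d.2 j).out (t j), by
    refine (Fin.forall_iff_succAbove d.1).2 ⟨fun j => ?_, fun i j => ?_⟩
    · simp [(hs _ j).ne']
    · simp only [Fin.insertNth_apply_succAbove]
      exact branch_fst_pow (hs _) _ _ j⟩

theorem centralParam_apply_self (hs : ∀ i j, 0 < s i j) (d : CentralIndex k I s)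
    (t : Fin k → ℂ) : (centralParam hs d t).1 d.1 = 0 := by
  simp [centralParam]

theorem centralParam_apply_succAbove (hs : ∀ i j, 0 < s i j) (d : CentralIndex k I s)
    (t : Fin k → ℂ) (j : Fin k) :
    (centralParam hs d t).1 (d.1.succAbove j)
      = branch (s (d.1.succAbove j)) (d.2 j).out (t j) := by
  simp [centralParam]

theorem isClosedEmbedding_centralParam (hs : ∀ i j, 0 < s i j) (d : CentralIndex k I s) :
    Topology.IsClosedEmbedding (centralParam hs d) := by
  refine .of_subtypeVal_comp (Topology.isClosedEmbedding_of_norm_le_max_one ?_ ?_ ?_)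
  · change Continuous fun t : Fin k → ℂ =>
      Fin.insertNth (α := fun i => (Fin (I i) → ℂ) × ℂ) d.1 0
        fun j => branch (s (d.1.succAbove j)) (d.2 j).out (t j)
    refine continuous_const.finInsertNth d.1 (continuous_pi fun j => ?_)
    exact (continuous_branch _).comp (continuous_apply j)
  · intro t t' h
    funext j
    apply branch_injective (hs _) (d.2 j).out
    rw [← centralParam_apply_succAbove hs, ← centralParam_apply_succAbove hs]
    exact congrFun h _
  · intro t
    refine (pi_norm_le_iff_of_nonneg (zero_le_one.trans (le_max_left _ _))).2 fun j => ?_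
    have hL := (branchDeg_pos (hs (d.1.succAbove j))).ne'
    calc ‖t j‖ ≤ max 1 ‖t j ^ branchDeg (s (d.1.succAbove j))‖ :=
          norm_le_max_one_norm_pow _ hL
      _ = max 1 ‖((centralParam hs d t).1 (d.1.succAbove j)).2‖ := by
        rw [centralParam_apply_succAbove]; rfl
      _ ≤ max 1 ‖(centralParam hs d t).1‖ :=
        max_le_max le_rfl ((norm_snd_le _).trans (norm_le_pi_norm _ _))

theorem range_centralParam_subset_iff (hs : ∀ i j, 0 < s i j) (d : CentralIndex k I s)
    (i : Fin (k + 1)) :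
    Set.range (centralParam hs d) ⊆ {x | (x.1 i).2 = 0} ↔ d.1 = i := by
  refine ⟨fun h => ?_, ?_⟩
  · by_contra hne
    obtain ⟨j, rfl⟩ := Fin.exists_succAbove_eq (Ne.symm hne)
    have := h ⟨fun _ => 1, rfl⟩
    simp [centralParam_apply_succAbove, branch] at this
  · rintro rfl _ ⟨t, rfl⟩
    simp [centralParam_apply_self]

theorem eq_of_range_centralParam_subset (hs : ∀ i j, 0 < s i j) {d d' : CentralIndex k I s}
    (h : Set.range (centralParam hs d) ⊆ Set.range (centralParam hs d')) : d = d' := by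
  obtain ⟨i, q⟩ := d
  obtain ⟨i', q'⟩ := d'
  obtain rfl : i = i' := (range_centralParam_subset_iff hs _ i').1
    (h.trans ((range_centralParam_subset_iff hs _ i').2 rfl))
  congr
  funext j
  refine eq_of_range_branch_out_subset (hs _) ?_
  rintro _ ⟨u, rfl⟩
  obtain ⟨t, ht⟩ := h ⟨fun _ => u, rfl⟩
  refine ⟨t j, ?_⟩
  have := congrArg (fun x : XiProd k I s => x.1 (i.succAbove j)) ht
  exact (centralParam_apply_succAbove hs ⟨i, q'⟩ t j).symm.trans
    (this.trans (centralParam_apply_succAbove hs ⟨i, q⟩ _ j))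

theorem exists_mem_range_centralParam (hs : ∀ i j, 0 < s i j) {x : XiProd k I s}
    {i : Fin (k + 1)} (hx : (x.1 i).2 = 0) :
    ∃ q, x ∈ Set.range (centralParam hs ⟨i, q⟩) := by
  choose q t ht using fun j =>
    exists_mem_range_branch_out (hs (i.succAbove j)) (x.2 (i.succAbove j))
  refine ⟨q, t, Subtype.ext <| funext <| (Fin.forall_iff_succAbove i).2 ⟨?_, fun j => ?_⟩⟩
  · rw [centralParam_apply_self, eq_zero_of_snd_eq_zero (hs i) (x.2 i) hx]
  · rw [centralParam_apply_succAbove, ht]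

theorem iUnion_range_centralParam (hs : ∀ i j, 0 < s i j) :
    ⋃ d, Set.range (centralParam hs d) = {x : XiProd k I s | ∏ i, (x.1 i).2 = 0} := by
  ext x
  simp only [Set.mem_iUnion, Set.mem_ofPred_eq, Finset.prod_eq_zero_iff, Finset.mem_univ,
    true_and]
  refine ⟨fun ⟨d, hd⟩ => ⟨d.1, (range_centralParam_subset_iff hs d d.1).2 rfl hd⟩,
    fun ⟨i, hi⟩ => ?_⟩
  obtain ⟨q, hq⟩ := exists_mem_range_centralParam hs hi
  exact ⟨_, hq⟩

theorem card_centralIndex_fiber (i : Fin (k + 1)) :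
    Nat.card (∀ j : Fin k, DiagOrbit (s (i.succAbove j)))
      = ∏ i' ∈ Finset.univ.erase i, diagOrbitCount (I i') (s i') := by
  rw [Nat.card_pi, ← Finset.compl_singleton, ← Fin.image_succAbove_univ,
    Finset.prod_image fun _ _ _ _ h => Fin.succAbove_right_injective h]
  rfl

theorem card_centralIndex (hs : ∀ i j, 0 < s i j) :
    Nat.card (CentralIndex k I s)
      = ∑ i, ∏ i' ∈ Finset.univ.erase i, diagOrbitCount (I i') (s i') := by
  have := fun i j => NeZero.of_pos (hs i j)
  rw [Nat.card_sigma]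
  exact Finset.sum_congr rfl fun i _ => card_centralIndex_fiber i

end Central

/-- The central fiber `p⁻¹(0)` is the union of the preimages of the coordinate
hyperplanes `{λ_i = 0}`, and it has exactly `∑_i ∏_{i'≠i} n_{i'}` irreducible components,
each homeomorphic to `ℂ^k`, with exactly `∏_{i'≠i} n_{i'}` of them contained in the
preimage of `{λ_i = 0}`. -/
theorem stmt4 (k : ℕ) (I : Fin (k + 1) → ℕ)
    (s : (i : Fin (k + 1)) → Fin (I i) → ℕ) (hs : ∀ i j, 0 < s i j) :
    {x : XiProd k I s | (∏ i, (x.1 i).2) = 0}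
        = ⋃ i : Fin (k + 1), {x : XiProd k I s | (x.1 i).2 = 0} ∧
    ∃ C : Fin (∑ i : Fin (k + 1),
          ∏ i' ∈ Finset.univ.erase i, diagOrbitCount (I i') (s i')) → Set (XiProd k I s),
      (⋃ m, C m) = {x : XiProd k I s | (∏ i, (x.1 i).2) = 0} ∧
      (∀ m, IsClosed (C m)) ∧
      (∀ m, Nonempty (↥(C m) ≃ₜ (Fin k → ℂ))) ∧
      (∀ m m', C m ⊆ C m' → m = m') ∧
      (∀ i : Fin (k + 1),
        Nat.card {m // C m ⊆ {x : XiProd k I s | (x.1 i).2 = 0}}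
          = ∏ i' ∈ Finset.univ.erase i, diagOrbitCount (I i') (s i')) := by
  have := fun i j => NeZero.of_pos (hs i j)
  let E := Finite.equivFinOfCardEq (card_centralIndex hs)
  refine ⟨by ext x; simp [Finset.prod_eq_zero_iff],
    fun m => Set.range (centralParam hs (E.symm m)), ?_,
    fun m => (isClosedEmbedding_centralParam hs _).isClosed_range,
    fun m => ⟨(isClosedEmbedding_centralParam hs _).isEmbedding.toHomeomorph.symm⟩,
    fun m m' h => E.symm.injective (eq_of_range_centralParam_subset hs h), fun i => ?_⟩
  · rw [← iUnion_range_centralParam hs]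
    exact E.symm.surjective.iUnion_comp fun d => Set.range (centralParam hs d)
  · rw [← card_centralIndex_fiber i]
    exact Nat.card_congr ((E.symm.subtypeEquiv fun m =>
      range_centralParam_subset_iff hs _ i).trans (Equiv.sigmaSubtype i))
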